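/- Pascal staircase with extra alphabet: with P = P_{1/(1−zy)} and any alphabet B, for d large enough W(d, {x_1+x_2} + B) = (y−1) y^{d−1} S_d(X_2 − y^{−1}B), where X_2 = {x_1, x_2} and y^{−1}B = {b/y : b ∈ B}. -/

import Mathlib

open scoped Classical

noncomputable section

/-- The generating series `∏_{a ∈ A} (1 - a z)` of an alphabet `A`. -/
def genS {R : Type*} [CommRing R] (A : Multiset R) : PowerSeries R :=
  (A.map (fun a => 1 - PowerSeries.C a * PowerSeries.X)).prod

/-- The complete function `S_j(A - B)` of a difference of alphabets, defined by the
generating series `∑ S_j(A-B) z^j = ∏_{b∈B}(1-bz) / ∏_{a∈A}(1-az)`. -/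
def SD {R : Type*} [CommRing R] (A B : Multiset R) (j : ℤ) : R :=
  if j < 0 then 0
  else PowerSeries.coeff j.toNat (genS B * PowerSeries.invOfUnit (genS A) 1)

/-- The Schur function `S_I(A - B)` for an index sequence `I` (written in the weakly
increasing convention), given by the Jacobi–Trudi determinant `|S_{i_q + q - p}(A-B)|`. -/
def SchurD {R : Type*} [CommRing R] (A B : Multiset R) {s : ℕ} (I : Fin s → ℕ) : R :=
  Matrix.det (Matrix.of fun p q : Fin s => SD A B ((I q : ℤ) + (q : ℤ) - (p : ℤ)))

/-- The resultant `R(A,B) = ∏_{a∈A, b∈B} (a - b)` of two alphabets. -/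
def Res {R : Type*} [CommRing R] (A B : Multiset R) : R :=
  (A.map (fun a => (B.map (fun b => a - b)).prod)).prod


/-- The Pascal staircase `[p_{s,t}]` (1-indexed) with first column `p_{s,1} = v s`,
zero pattern `p_{s,t} = 0` for `2(t−1) > s−1`, and recursion
`p_{s+1,t} = p_{s,t−1} + p_{s,t}`. -/
def pstair {R : Type*} [CommRing R] (v : ℕ → R) : ℕ → ℕ → R
  | 0, _ => 0
  | _ + 1, 0 => 0
  | s + 1, 1 => v (s + 1)
  | s + 1, t + 2 =>
    if 2 * (t + 1) > s then 0 else pstair v s (t + 1) + pstair v s (t + 2)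

/-- `W(d, A) = Σ_{i,j} p_{d+1−i, j+1} · S_i(−A) · S_{(j, d−i−j)}(x_1, x_2)`. -/
def Wfun {R : Type*} [CommRing R] (v : ℕ → R) (x1 x2 : R) (A : Multiset R) (d : ℕ) : R :=
  ∑ i ∈ Finset.range (d + 1), ∑ j ∈ Finset.range (d + 1),
    pstair v (d + 1 - i) (j + 1) * SD 0 A (i : ℤ)
      * SchurD ({x1, x2} : Multiset R) 0 (![j, d - i - j] : Fin 2 → ℕ)

/-! Expanding the `2 × 2` Jacobi–Trudi determinants gives `W(d, A) = Σᵢ Sᵢ(-A) G(d - i)` with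
`G(m) = Σⱼ p_{m+1,j+1} (x₁x₂)ʲ h_{m-2j}(X₂)`, i.e. `W(·, A)` is the coefficient sequence of
`∏_{a ∈ A} (1 - az) · Σₘ G(m) zᵐ`. The Pascal recursion of the staircase and the recursion
`h_k = (x₁ + x₂) h_{k-1} - x₁x₂ h_{k-2}` give
`G(m+1) - (x₁ + x₂) G(m) = (v_{m+2} - v_{m+1}) h_{m+1}`, so the letter `x₁ + x₂` leaves
`W(m+1, {x₁ + x₂}) = (y - 1) yᵐ h_{m+1}(X₂)`. Every further letter `b` multiplies the series
by `1 - bz`, which for `v_s = y^{s-1}` amounts to subtracting the letter `b/y` from `X₂`, as long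
as `d` exceeds the number of letters. -/

open PowerSeries

section Alphabets

variable {R : Type*} [CommRing R]

theorem genS_zero : genS (0 : Multiset R) = 1 := by
  simp [genS]

theorem genS_cons (a : R) (A : Multiset R) :
    genS (a ::ₘ A) = (1 - C a * X) * genS A := by
  simp [genS]

theorem constantCoeff_genS (A : Multiset R) : constantCoeff (genS A) = 1 := by
  induction A using Multiset.induction_on with
  | empty => simp [genS_zero]
  | cons a A ih => simp [genS_cons, ih]

theorem coeff_succ_one_sub_C_mul_X_mul (a : R) (f : PowerSeries R) (n : ℕ) :
    coeff (n + 1) ((1 - C a * X) * f) = coeff (n + 1) f - a * coeff n f := by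
  rw [sub_mul, one_mul, mul_assoc, map_sub, coeff_C_mul, coeff_succ_X_mul]

theorem SD_of_neg (A B : Multiset R) {k : ℤ} (hk : k < 0) : SD A B k = 0 :=
  if_pos hk

theorem SD_natCast (A B : Multiset R) (n : ℕ) :
    SD A B n = coeff n (genS B * invOfUnit (genS A) 1) := by
  simp [SD]

theorem SD_zero_left (B : Multiset R) (n : ℕ) : SD 0 B n = coeff n (genS B) := by
  have hinv : invOfUnit (genS (0 : Multiset R)) 1 = 1 := by
    simpa [genS_zero] using mul_invOfUnit (1 : PowerSeries R) 1 (by simp)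
  rw [SD_natCast, hinv, mul_one]

theorem SD_self (A : Multiset R) (k : ℤ) : SD A A k = if k = 0 then 1 else 0 := by
  rcases lt_or_ge k 0 with hk | hk
  · rw [SD_of_neg A A hk, if_neg hk.ne]
  · lift k to ℕ using hk
    rw [SD_natCast, mul_invOfUnit _ 1 (by simp [constantCoeff_genS]), coeff_one]
    simp

theorem SD_cons_right (A B : Multiset R) (a : R) (k : ℤ) :
    SD A (a ::ₘ B) k = SD A B k - a * SD A B (k - 1) := by
  rcases lt_or_ge k 0 with hk | hk
  · simp [SD_of_neg _ _ hk, SD_of_neg A B (k := k - 1) (by omega)]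
  · lift k to ℕ using hk
    rw [SD_natCast, SD_natCast, genS_cons, mul_assoc]
    rcases k with _ | n
    · simp [SD_of_neg A B (k := -1) (by omega), sub_mul, mul_assoc]
    · push_cast
      rw [add_sub_cancel_right, coeff_succ_one_sub_C_mul_X_mul, SD_natCast]

end Alphabets

section CompletePair

variable {R : Type*} [CommRing R] (x1 x2 : R)

def hsymmPair (k : ℤ) : R := SD ({x1, x2} : Multiset R) 0 k

theorem hsymmPair_of_neg {k : ℤ} (hk : k < 0) : hsymmPair x1 x2 k = 0 :=
  SD_of_neg _ _ hk

theorem hsymmPair_sub_add (k : ℤ) :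
    hsymmPair x1 x2 k - (x1 + x2) * hsymmPair x1 x2 (k - 1) + x1 * x2 * hsymmPair x1 x2 (k - 2)
      = if k = 0 then 1 else 0 := by
  have hpair : ({x1, x2} : Multiset R) = x1 ::ₘ x2 ::ₘ 0 := rfl
  rw [← SD_self ({x1, x2} : Multiset R) k]
  conv_rhs => rw [hpair]
  rw [SD_cons_right, SD_cons_right, SD_cons_right, ← hpair, sub_sub]
  simp only [hsymmPair]
  ring_nf

theorem hsymmPair_zero : hsymmPair x1 x2 0 = 1 := by
  simpa [hsymmPair_of_neg] using hsymmPair_sub_add x1 x2 0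

theorem hsymmPair_eq_of_pos {k : ℤ} (hk : 0 < k) :
    hsymmPair x1 x2 k
      = (x1 + x2) * hsymmPair x1 x2 (k - 1) - x1 * x2 * hsymmPair x1 x2 (k - 2) := by
  linear_combination (hsymmPair_sub_add x1 x2 k).trans (if_neg hk.ne')

theorem hsymmPair_mul_sub_mul (a : ℕ) (b : ℤ) (hab : a ≤ b + 1) :
    hsymmPair x1 x2 a * hsymmPair x1 x2 b - hsymmPair x1 x2 (b + 1) * hsymmPair x1 x2 (a - 1)
      = (x1 * x2) ^ a * hsymmPair x1 x2 (b - a) := by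
  induction a generalizing b with
  | zero => simp [hsymmPair_zero, hsymmPair_of_neg]
  | succ a ih =>
    push_cast at hab ⊢
    rw [hsymmPair_eq_of_pos x1 x2 (by omega : (0 : ℤ) < a + 1),
      hsymmPair_eq_of_pos x1 x2 (by omega : (0 : ℤ) < b + 1)]
    have hrec := ih (b - 1) (by omega)
    simp only [sub_add_cancel, show b - 1 - a = b - (a + 1) by ring] at hrec
    simp only [add_sub_cancel_right, show (a : ℤ) + 1 - 2 = a - 1 by ring,
      show b + 1 - 2 = b - 1 by ring]
    linear_combination x1 * x2 * hrec

theorem SchurD_pair_of_le {a b : ℕ} (hab : a ≤ b + 1) :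
    SchurD ({x1, x2} : Multiset R) 0 ![a, b] = (x1 * x2) ^ a * hsymmPair x1 x2 (b - a) := by
  rw [← hsymmPair_mul_sub_mul x1 x2 a b (by omega), SchurD, Matrix.det_fin_two]
  simp [hsymmPair]

end CompletePair

section Staircase

variable {R : Type*} [CommRing R] (v : ℕ → R)

theorem pstair_eq_zero {s t : ℕ} (h : s + 1 < 2 * t) : pstair v s t = 0 := by
  match s, t with
  | 0, _ => rfl
  | s + 1, t + 2 => exact if_pos (by omega)

theorem pstair_succ_one (s : ℕ) : pstair v (s + 1) 1 = v (s + 1) := rfl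

theorem pstair_succ_succ {s t : ℕ} (h : s ≠ 2 * t + 1) :
    pstair v (s + 1) (t + 2) = pstair v s (t + 1) + pstair v s (t + 2) := by
  by_cases hst : 2 * (t + 1) ≤ s
  · exact if_neg (by omega)
  · rw [pstair_eq_zero v (by omega), pstair_eq_zero v (by omega), pstair_eq_zero v (by omega),
      add_zero]

end Staircase

section StairSum

open Finset

variable {R : Type*} [CommRing R] (v : ℕ → R) (x1 x2 : R)

/-- `G(m)`, which is also `W(m, ∅)`. -/
def stairSum (m : ℕ) : R :=
  ∑ j ∈ range (m + 1), pstair v (m + 1) (j + 1) * (x1 * x2) ^ j * hsymmPair x1 x2 (m - 2 * j)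

theorem stairSum_eq_sum_range {m N : ℕ} (hN : m + 1 ≤ N) :
    stairSum v x1 x2 m
      = ∑ j ∈ range N, pstair v (m + 1) (j + 1) * (x1 * x2) ^ j * hsymmPair x1 x2 (m - 2 * j) := by
  refine sum_subset (range_subset_range.mpr hN) fun j _ hj => ?_
  rw [mem_range, not_lt] at hj
  rw [pstair_eq_zero v (by omega), zero_mul, zero_mul]

theorem stairSum_succ (m : ℕ) :
    stairSum v x1 x2 (m + 1)
      = (x1 + x2) * stairSum v x1 x2 m + (v (m + 2) - v (m + 1)) * hsymmPair x1 x2 (m + 1) := by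
  let U (j : ℕ) := pstair v (m + 1) (j + 1) * (x1 * x2) ^ j * hsymmPair x1 x2 (m - 1 - 2 * j)
  let W (j : ℕ) :=
    pstair v (m + 1) (j + 2) * (x1 * x2) ^ (j + 1) * hsymmPair x1 x2 (m - 1 - 2 * j)
  have hG : stairSum v x1 x2 (m + 1)
      = ∑ j ∈ range (m + 1), (x1 * x2 * U j + W j) + v (m + 2) * hsymmPair x1 x2 (m + 1) := by
    rw [stairSum, sum_range_succ', pstair_succ_one]
    push_cast
    refine congrArg₂ _ (sum_congr rfl fun j _ => ?_) (by ring_nf)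
    rw [show (m : ℤ) + 1 - 2 * (j + 1) = m - 1 - 2 * j by ring]
    by_cases hj : m = 2 * j
    -- the Pascal recursion fails exactly here, where the factor `h_{-1}` vanishes
    · simp [U, W, hsymmPair_of_neg x1 x2 (show (m : ℤ) - 1 - 2 * j < 0 by omega)]
    · rw [pstair_succ_succ v (by omega)]
      ring
  let V (j : ℕ) := pstair v (m + 1) (j + 1) * (x1 * x2) ^ j * hsymmPair x1 x2 (m + 1 - 2 * j)
  have hV : ∑ j ∈ range (m + 2), V j
      = ∑ j ∈ range (m + 1), W j + v (m + 1) * hsymmPair x1 x2 (m + 1) := by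
    rw [sum_range_succ']
    refine congrArg₂ _ (sum_congr rfl fun j _ => ?_) (by simp [V, pstair_succ_one])
    simp only [V, W]
    push_cast
    rw [show (m : ℤ) + 1 - 2 * (j + 1) = m - 1 - 2 * j by ring]
  have hV' : ∑ j ∈ range (m + 2), V j
      = (x1 + x2) * stairSum v x1 x2 m - x1 * x2 * ∑ j ∈ range (m + 1), U j := by
    have hU : ∑ j ∈ range (m + 1), U j = ∑ j ∈ range (m + 2), U j := by
      have hlast : pstair v (m + 1) (m + 1 + 1) = 0 := pstair_eq_zero v (by omega)
      simp [sum_range_succ _ (m + 1), U, hlast]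
    rw [stairSum_eq_sum_range v x1 x2 (by omega : m + 1 ≤ m + 2), hU, mul_sum, mul_sum,
      ← sum_sub_distrib]
    refine sum_congr rfl fun j _ => ?_
    by_cases hj : 2 * j ≤ m
    · simp only [V, U, hsymmPair_eq_of_pos x1 x2 (show (0 : ℤ) < m + 1 - 2 * j by omega)]
      ring_nf
    · simp [V, U, pstair_eq_zero v (show m + 1 + 1 < 2 * (j + 1) by omega)]
  rw [hG, sum_add_distrib, ← mul_sum]
  linear_combination hV' - hV

theorem Wfun_eq_coeff (A : Multiset R) (d : ℕ) :
    Wfun v x1 x2 A d = coeff d (genS A * mk (stairSum v x1 x2)) := by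
  rw [Wfun, coeff_mul, Nat.sum_antidiagonal_eq_sum_range_succ
    (fun i k => coeff i (genS A) * coeff k (mk (stairSum v x1 x2)))]
  refine sum_congr rfl fun i hi => ?_
  have hid : i ≤ d := Nat.lt_succ_iff.mp (mem_range.mp hi)
  rw [coeff_mk, ← SD_zero_left, stairSum_eq_sum_range v x1 x2 (N := d + 1) (by omega), mul_sum,
    show d + 1 - i = d - i + 1 by omega]
  refine sum_congr rfl fun j _ => ?_
  by_cases hj : 2 * j ≤ d - i
  · rw [SchurD_pair_of_le x1 x2 (by omega)]
    push_cast [Nat.sub_sub, show i + j ≤ d by omega, hid]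
    ring_nf
  · rw [pstair_eq_zero v (by omega)]
    ring

theorem Wfun_cons_succ (a : R) (A : Multiset R) (d : ℕ) :
    Wfun v x1 x2 (a ::ₘ A) (d + 1) = Wfun v x1 x2 A (d + 1) - a * Wfun v x1 x2 A d := by
  simp only [Wfun_eq_coeff, genS_cons, mul_assoc, coeff_succ_one_sub_C_mul_X_mul]

theorem Wfun_singleton_succ (m : ℕ) :
    Wfun v x1 x2 {x1 + x2} (m + 1) = (v (m + 2) - v (m + 1)) * hsymmPair x1 x2 (m + 1) := by
  rw [Wfun_eq_coeff, ← Multiset.cons_zero, genS_cons, genS_zero, mul_one,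
    coeff_succ_one_sub_C_mul_X_mul, coeff_mk, coeff_mk, stairSum_succ]
  ring

end StairSum

theorem Wfun_pow_singleton_add {R : Type*} [CommRing R] (x1 x2 : R) (y : Rˣ) (B : Multiset R)
    {d : ℕ} (hd : Multiset.card B < d) :
    Wfun (fun s => (y : R) ^ (s - 1)) x1 x2 ({x1 + x2} + B) d
      = ((y : R) - 1) * (y : R) ^ (d - 1) * SD {x1, x2} (B.map ((y⁻¹ : Rˣ) * ·)) d := by
  induction B using Multiset.induction_on generalizing d with
  | empty =>
    obtain ⟨m, rfl⟩ : ∃ m, d = m + 1 := Nat.exists_eq_add_one.mpr hd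
    rw [add_zero, Multiset.map_zero, Wfun_singleton_succ]
    simp only [show m + 2 - 1 = m + 1 by omega, add_tsub_cancel_right, hsymmPair, pow_succ]
    push_cast
    ring
  | cons b B ih =>
    rw [Multiset.card_cons] at hd
    obtain ⟨n, rfl⟩ : ∃ n, d = n + 2 := ⟨d - 2, by omega⟩
    rw [Multiset.add_cons, Wfun_cons_succ, ih (by omega), ih (by omega), Multiset.map_cons,
      SD_cons_right]
    have hy : (y : R) ^ (n + 1) * ((y⁻¹ : Rˣ) : R) = (y : R) ^ n := by
      rw [pow_succ, mul_assoc, Units.mul_inv, mul_one]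
    push_cast
    rw [show (n : ℤ) + 1 + 1 = n + 2 by ring, show (n : ℤ) + 2 - 1 = n + 1 by ring]
    linear_combination (((y : R) - 1) * b * SD {x1, x2} (B.map ((y⁻¹ : Rˣ) * ·)) (n + 1)) * hy

/-- Pascal staircase with extra alphabet: with `P = P_{1/(1−zy)}` (first column
`v_s = y^{s−1}`, `y` invertible) and any alphabet `B`, for `d` large enough
`W(d, {x_1+x_2} + B) = (y−1) y^{d−1} S_d(X_2 − y^{−1}B)`, where `X_2 = {x_1,x_2}`
and `y^{−1}B = {b/y : b ∈ B}`. -/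
theorem pascal_staircase_extra_alphabet {R : Type*} [CommRing R]
    (x1 x2 : R) (y : Rˣ) (B : Multiset R) :
    ∃ d₀ : ℕ, ∀ d : ℕ, d₀ ≤ d →
      Wfun (fun s => (y : R) ^ (s - 1)) x1 x2 (({x1 + x2} : Multiset R) + B) d
        = ((y : R) - 1) * (y : R) ^ (d - 1)
          * SD ({x1, x2} : Multiset R) (B.map (fun b => ((y⁻¹ : Rˣ) : R) * b)) (d : ℤ) :=
  ⟨Multiset.card B + 1, fun _ hd => Wfun_pow_singleton_add x1 x2 y B hd⟩
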